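/- Let G be a chordal graph and W a set of vertices inducing a connected subgraph such that some clique Q ⊆ N(W) satisfies: every vertex of Q has a neighbor in W and there is no vertex of W adjacent to all of Q. Then G contains an induced cycle of length at least 4. Equivalently, in a chordal graph, if G[W] is connected and Q is a clique with each vertex of Q having a neighbor in W, then some vertex of W is adjacent to every vertex of Q. -/

import Mathlib

open SimpleGraph

section Defs
variable {V : Type*}

/-- `S` is a dominating set of `G`. -/
def Dominates (G : SimpleGraph V) (S : Set V) : Prop :=
  ∀ v : V, v ∈ S ∨ ∃ u ∈ S, G.Adj u v

/-- The domination number `γ(G)`. -/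
noncomputable def domNum (G : SimpleGraph V) [Fintype V] : ℕ :=
  sInf {n | ∃ S : Finset V, S.card = n ∧ Dominates G ↑S}

/-- The bondage number `b(G)`. -/
noncomputable def bondageNum (G : SimpleGraph V) [Fintype V] : ℕ :=
  sInf {n | ∃ A : Finset (Sym2 V), ↑A ⊆ G.edgeSet ∧ A.card = n ∧
    domNum (G.deleteEdges ↑A) = domNum G + 1}

/-- The clique number `ω(G)`. -/
noncomputable def cliqueNum' (G : SimpleGraph V) [Fintype V] : ℕ :=
  sSup {n | ∃ s : Finset V, G.IsNClique n s}

/-- The degree of a vertex. -/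
noncomputable def vdeg (G : SimpleGraph V) (v : V) : ℕ := (G.neighborSet v).ncard

/-- The maximum degree `Δ(G)`. -/
noncomputable def maxDeg (G : SimpleGraph V) [Fintype V] : ℕ :=
  sSup {d | ∃ v, vdeg G v = d}

/-- A chordal graph: no induced cycle of length at least 4. -/
def Chordal (G : SimpleGraph V) : Prop :=
  ∀ n, 4 ≤ n → IsEmpty (cycleGraph n ↪g G)

/-- The corona `G ∘ K₁`: attach a pendant vertex to each vertex of `G`. -/
def coronaK1 (G : SimpleGraph V) : SimpleGraph (V ⊕ V) :=
  SimpleGraph.fromRel (fun a b =>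
    (∃ u v, a = Sum.inl u ∧ b = Sum.inl v ∧ G.Adj u v) ∨
    (∃ u, a = Sum.inl u ∧ b = Sum.inr u))

end Defs

/-! Induction on the clique `Q`. Suppose `w ∈ W` sees `Q \ {q}`. A shortest path
`x₀, …, xₙ = w` in `G[W]` from the neighbourhood of `q` is induced and meets `N(q)` only in `x₀`.
If `x₀` missed some `q' ∈ Q`, then, since `q'` sees `w`, cutting the path at the first `xᵢ`
adjacent to `q'` would give the induced cycle `q, x₀, …, xᵢ, q'` of length `i + 3 ≥ 4`. -/

theorem Function.update_succ_apply_of_le {α : Type*} (y : ℕ → α) (v : α) {i n : ℕ}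
    (hi : i ≤ n) : Function.update y (n + 1) v i = y i :=
  Function.update_of_ne (by omega) _ _

theorem Set.InjOn.update_succ {α : Type*} {y : ℕ → α} {n : ℕ} {v : α}
    (hy : Set.InjOn y (Set.Iic n)) (hv : ∀ i ≤ n, y i ≠ v) :
    Set.InjOn (Function.update y (n + 1) v) (Set.Iic (n + 1)) := by
  intro i hi j hj hij
  rcases Nat.le_succ_iff.mp hi with hi | rfl <;> rcases Nat.le_succ_iff.mp hj with hj | rfl
  · rw [Function.update_succ_apply_of_le _ _ hi, Function.update_succ_apply_of_le _ _ hj] at hij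
    exact hy hi hj hij
  · rw [Function.update_succ_apply_of_le _ _ hi, Function.update_self] at hij
    exact absurd hij (hv i hi)
  · rw [Function.update_succ_apply_of_le _ _ hj, Function.update_self] at hij
    exact absurd hij.symm (hv j hj)
  · rfl

namespace SimpleGraph

variable {U V : Type*} {H : SimpleGraph U} {G : SimpleGraph V}

theorem cycleGraph_adj_iff_val {n : ℕ} {a b : Fin (n + 2)} :
    (cycleGraph (n + 2)).Adj a b ↔ a.val + 1 = b.val ∨ b.val + 1 = a.val ∨
      (a.val = 0 ∧ b.val = n + 1) ∨ (a.val = n + 1 ∧ b.val = 0) := by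
  have ha := a.isLt
  have hb := b.isLt
  rw [cycleGraph_adj']
  rcases lt_trichotomy a b with h | rfl | h
  · rw [Fin.coe_sub_iff_le.mpr h.le, Fin.coe_sub_iff_lt.mpr h]
    have := Fin.lt_def.mp h
    omega
  · simp only [sub_self, Fin.val_zero]
    omega
  · rw [Fin.coe_sub_iff_le.mpr h.le, Fin.coe_sub_iff_lt.mpr h]
    have := Fin.lt_def.mp h
    omega

/-- Indexed by `ℕ` rather than given as an embedding of `pathGraph (n + 1)`, so that all index
arithmetic stays in `ℕ`. -/
structure IsInducedPath (G : SimpleGraph V) (y : ℕ → V) (n : ℕ) : Prop where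
  injOn : Set.InjOn y (Set.Iic n)
  adj_iff : ∀ ⦃i⦄, i ≤ n → ∀ ⦃j⦄, j ≤ n → (G.Adj (y i) (y j) ↔ i + 1 = j ∨ j + 1 = i)

namespace IsInducedPath

variable {y : ℕ → V} {m n : ℕ}

theorem mono (hy : IsInducedPath G y n) (hmn : m ≤ n) : IsInducedPath G y m where
  injOn := hy.injOn.mono (Set.Iic_subset_Iic.mpr hmn)
  adj_iff _ hi _ hj := hy.adj_iff (hi.trans hmn) (hj.trans hmn)

theorem map {y : ℕ → U} (hy : IsInducedPath H y n) (f : H ↪g G) :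
    IsInducedPath G (f ∘ y) n where
  injOn := f.injective.comp_injOn hy.injOn
  adj_iff _ hi _ hj := f.map_adj_iff.trans (hy.adj_iff hi hj)

theorem update_succ {v : V} (hy : IsInducedPath G y n) (hv : ∀ i ≤ n, y i ≠ v)
    (hadj : ∀ i ≤ n, G.Adj (y i) v ↔ i = n) :
    IsInducedPath G (Function.update y (n + 1) v) (n + 1) where
  injOn := hy.injOn.update_succ hv
  adj_iff i hi j hj := by
    rcases Nat.le_succ_iff.mp hi with hi | rfl <;> rcases Nat.le_succ_iff.mp hj with hj | rfl
    · rw [Function.update_succ_apply_of_le _ _ hi, Function.update_succ_apply_of_le _ _ hj]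
      exact hy.adj_iff hi hj
    · rw [Function.update_succ_apply_of_le _ _ hi, Function.update_self, hadj i hi]
      omega
    · rw [Function.update_succ_apply_of_le _ _ hj, Function.update_self, adj_comm, hadj j hj]
      omega
    · simp

end IsInducedPath

theorem Walk.dist_le_add_dist_getVert {u v : U} (p : H.Walk u v) (i j : ℕ) :
    H.dist u v ≤ i + H.dist (p.getVert i) (p.getVert j) + (p.length - j) := by
  obtain ⟨r, hr⟩ := ((p.take i).reachable.symm.trans p.reachable |>.trans
    (p.drop j).reachable.symm).exists_walk_length_eq_dist
  have := dist_le ((p.take i).append (r.append (p.drop j)))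
  simp only [Walk.length_append, Walk.take_length, Walk.drop_length, hr] at this
  omega

theorem Walk.isInducedPath_getVert_of_length_eq_dist {u v : U} (p : H.Walk u v)
    (hp : p.length = H.dist u v) :
    IsInducedPath H p.getVert p.length where
  injOn i hi j hj hij := by
    have h₁ := p.dist_le_add_dist_getVert i j
    have h₂ := p.dist_le_add_dist_getVert j i
    simp only [hij, dist_self] at h₁ h₂
    simp only [Set.mem_Iic] at hi hj
    omega
  adj_iff i hi j hj := by
    refine ⟨fun hadj => ?_, ?_⟩
    · have h₁ := p.dist_le_add_dist_getVert i j
      have h₂ := p.dist_le_add_dist_getVert j i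
      rw [dist_eq_one_iff_adj.mpr hadj] at h₁
      rw [dist_eq_one_iff_adj.mpr hadj.symm] at h₂
      have : i ≠ j := by rintro rfl; exact hadj.ne rfl
      omega
    · rintro (rfl | rfl)
      · exact p.adj_getVert_succ (by omega)
      · exact (p.adj_getVert_succ (by omega)).symm

theorem Connected.exists_isInducedPath_from (hH : H.Connected) {A : Set U} (hA : A.Nonempty)
    (w : U) :
    ∃ n y, IsInducedPath H y n ∧ y 0 ∈ A ∧ y n = w ∧ ∀ i, 0 < i → i ≤ n → y i ∉ A := by
  obtain ⟨a, haA, hmin⟩ : ∃ a ∈ A, ∀ b ∈ A, H.dist a w ≤ H.dist b w :=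
    ⟨_, Function.argminOn_mem _ _ hA, fun b hb => Function.argminOn_le (H.dist · w) _ hb⟩
  obtain ⟨p, hp⟩ := hH.exists_walk_length_eq_dist a w
  refine ⟨p.length, p.getVert, p.isInducedPath_getVert_of_length_eq_dist hp,
    by rwa [p.getVert_zero], p.getVert_length, fun i hi₀ hi hiA => ?_⟩
  have := dist_le (p.drop i)
  rw [p.drop_length] at this
  have := hmin _ hiA
  omega

end SimpleGraph

section Chordal

variable {V : Type*} {G : SimpleGraph V}

theorem Chordal.exists_adj_of_isInducedPath (hch : Chordal G) {y : ℕ → V} {m : ℕ} {v : V}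
    (hy : IsInducedPath G y m) (hm : 2 ≤ m) (hv : ∀ i ≤ m, y i ≠ v)
    (hv₀ : G.Adj (y 0) v) (hvm : G.Adj (y m) v) : ∃ i, 0 < i ∧ i < m ∧ G.Adj (y i) v := by
  by_contra! hno
  have hadj : ∀ i ≤ m, G.Adj (y i) v ↔ i = 0 ∨ i = m := by
    intro i hi
    refine ⟨fun h => ?_, by rintro (rfl | rfl) <;> assumption⟩
    by_contra! hi'
    exact hno i (by omega) (by omega) h
  have hz := hy.injOn.update_succ hv
  refine (hch (m + 2) (by omega)).false ⟨⟨fun a => Function.update y (m + 1) v a,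
    fun a b h => Fin.ext (hz (Nat.lt_succ_iff.mp a.isLt) (Nat.lt_succ_iff.mp b.isLt) h)⟩, ?_⟩
  intro a b
  show G.Adj (Function.update y (m + 1) v a) (Function.update y (m + 1) v b) ↔ _
  rw [cycleGraph_adj_iff_val]
  rcases Nat.le_succ_iff.mp (Nat.lt_succ_iff.mp a.isLt) with ha | ha <;>
    rcases Nat.le_succ_iff.mp (Nat.lt_succ_iff.mp b.isLt) with hb | hb
  · rw [Function.update_succ_apply_of_le _ _ ha, Function.update_succ_apply_of_le _ _ hb,
      hy.adj_iff ha hb]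
    omega
  · rw [Function.update_succ_apply_of_le _ _ ha, hb, Function.update_self, hadj _ ha]
    omega
  · rw [Function.update_succ_apply_of_le _ _ hb, ha, Function.update_self, adj_comm, hadj _ hb]
    omega
  · rw [ha, hb, Function.update_self]
    simp only [SimpleGraph.irrefl, false_iff]
    omega

theorem Chordal.adj_of_isInducedPath (hch : Chordal G) {x : ℕ → V} {n : ℕ} {q q' : V}
    (hx : IsInducedPath G x n) (hqq' : G.Adj q q') (hxq : ∀ i ≤ n, x i ≠ q)
    (hxq' : ∀ i ≤ n, x i ≠ q') (hq : ∀ i ≤ n, G.Adj (x i) q ↔ i = 0) (hq' : G.Adj (x n) q') :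
    G.Adj (x 0) q' := by
  by_contra hq'₀
  obtain ⟨i, hxi, hmin⟩ : ∃ i, G.Adj (x i) q' ∧ ∀ j, G.Adj (x j) q' → i ≤ j :=
    ⟨sInf {j | G.Adj (x j) q'}, Nat.sInf_mem (s := {j | G.Adj (x j) q'}) ⟨n, hq'⟩,
      fun j hj => Nat.sInf_le hj⟩
  have hi : i ≤ n := hmin n hq'
  have hi₀ : 0 < i := Nat.pos_of_ne_zero fun h => hq'₀ (h ▸ hxi)
  have hpath := (hx.mono hi).update_succ (fun j hj => hxq' j (hj.trans hi))
    (fun j hj => ⟨fun h => le_antisymm hj (hmin j h), fun h => h ▸ hxi⟩)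
  have hzq : ∀ j ≤ i + 1, Function.update x (i + 1) q' j ≠ q := by
    intro j hj
    rcases Nat.le_succ_iff.mp hj with hj | rfl
    · rw [Function.update_succ_apply_of_le _ _ hj]
      exact hxq j (hj.trans hi)
    · rw [Function.update_self]
      exact hqq'.ne'
  have hz₀ : G.Adj (Function.update x (i + 1) q' 0) q := by
    rw [Function.update_succ_apply_of_le _ _ (Nat.zero_le _)]
    exact (hq 0 (Nat.zero_le _)).mpr rfl
  have hz₁ : G.Adj (Function.update x (i + 1) q' (i + 1)) q := by
    rw [Function.update_self]
    exact hqq'.symm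
  obtain ⟨j, hj₀, hj, hqj⟩ := hch.exists_adj_of_isInducedPath hpath (by omega) hzq hz₀ hz₁
  rw [Function.update_succ_apply_of_le _ _ (by omega)] at hqj
  exact hj₀.ne' ((hq j (by omega)).mp hqj)

theorem Chordal.exists_adj_insert (hch : Chordal G) {W Q : Set V}
    (hconn : (G.induce W).Connected) {q : V} (hqQ : ∀ a ∈ Q, G.Adj q a)
    (hdisj : Disjoint (insert q Q) W) (hqW : ∃ x ∈ W, G.Adj q x)
    (hQW : ∃ w ∈ W, ∀ a ∈ Q, G.Adj w a) :
    ∃ w ∈ W, ∀ a ∈ insert q Q, G.Adj w a := by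
  obtain ⟨w, hwW, hwQ⟩ := hQW
  obtain ⟨x₀, hx₀W, hqx₀⟩ := hqW
  obtain ⟨n, y, hy, hy₀, hyn, hyA⟩ := hconn.exists_isInducedPath_from
    (A := {x : W | G.Adj q x}) ⟨⟨x₀, hx₀W⟩, hqx₀⟩ ⟨w, hwW⟩
  set x : ℕ → V := Embedding.induce W ∘ y
  have hxQ : ∀ a ∈ insert q Q, ∀ i, x i ≠ a :=
    fun a ha i h => Set.disjoint_left.mp hdisj ha (h ▸ (y i).2)
  have hxq : ∀ i ≤ n, G.Adj (x i) q ↔ i = 0 := by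
    refine fun i hi => ⟨fun h => ?_, fun h => h ▸ (hy₀ : G.Adj q (x 0)).symm⟩
    by_contra hi₀
    exact hyA i (Nat.pos_of_ne_zero hi₀) hi h.symm
  have hxn : x n = w := congrArg Subtype.val hyn
  refine ⟨x 0, (y 0).2, Set.forall_mem_insert.mpr ⟨(hxq 0 (Nat.zero_le _)).mpr rfl,
    fun q' hq' => ?_⟩⟩
  exact hch.adj_of_isInducedPath (hy.map (Embedding.induce W)) (hqQ q' hq')
    (fun i _ => hxQ q (Set.mem_insert q Q) i) (fun i _ => hxQ q' (Set.mem_insert_of_mem q hq') i)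
    hxq (hxn ▸ hwQ q' hq')

end Chordal

/-- in a chordal graph, if `G[W]` is connected and `Q ⊆ N(W)` is a
clique each of whose vertices has a neighbor in `W`, then some vertex of `W`
is adjacent to every vertex of `Q`. -/
theorem exists_vertex_adj_all_clique (V : Type*) [Fintype V] (G : SimpleGraph V)
    (hch : Chordal G) (W Q : Set V)
    (hconn : (G.induce W).Connected)
    (hQ : G.IsClique Q) (hdisj : Disjoint Q W)
    (hQN : ∀ q ∈ Q, ∃ w ∈ W, G.Adj q w) :
    ∃ w ∈ W, ∀ q ∈ Q, G.Adj w q := by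
  refine Set.Finite.induction_on_subset (motive := fun t _ => ∃ w ∈ W, ∀ a ∈ t, G.Adj w a)
    Q Q.toFinite ?_ ?_
  · obtain ⟨⟨w, hw⟩⟩ := hconn.nonempty
    exact ⟨w, hw, by simp⟩
  · intro q t hqQ htQ hqt ih
    exact hch.exists_adj_insert hconn
      (fun a ha => hQ hqQ (htQ ha) (ne_of_mem_of_not_mem ha hqt).symm)
      (hdisj.mono_left (Set.insert_subset hqQ htQ)) (hQN q hqQ) ih
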